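/- Cross-support pruning is sound for the bond measure: let 0 < minbond ≤ 1 and X ⊆ ℐ. If there exist items x, y ∈ X with Supp(∧{x}) < minbond · Supp(∧{y}), then bond(X) < minbond, i.e. X is not correlated. -/

import Mathlib

open Finset

variable {τ ι : Type*} [DecidableEq ι]

/-- Conjunctive support: number of transactions containing the whole pattern. -/
def suppConj (T : Finset τ) (items : τ → Finset ι) (X : Finset ι) : ℕ :=
  (T.filter fun t => X ⊆ items t).card

/-- Disjunctive support: number of transactions containing at least one item of the pattern. -/
def suppDisj (T : Finset τ) (items : τ → Finset ι) (X : Finset ι) : ℕ :=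
  (T.filter fun t => (X ∩ items t).Nonempty).card

/-- The bond measure (division by zero in `ℚ` yields `0`, matching the convention). -/
def bond (T : Finset τ) (items : τ → Finset ι) (X : Finset ι) : ℚ :=
  (suppConj T items X : ℚ) / (suppDisj T items X : ℚ)

section Support

variable (T : Finset τ) (items : τ → Finset ι)

theorem suppConj_anti {X Y : Finset ι} (hXY : X ⊆ Y) :
    suppConj T items Y ≤ suppConj T items X :=
  card_le_card <| monotone_filter_right _ fun _ _ hY => hXY.trans hY

theorem suppDisj_mono {X Y : Finset ι} (hXY : X ⊆ Y) :
    suppDisj T items X ≤ suppDisj T items Y :=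
  card_le_card <| monotone_filter_right _ fun _ _ hX => hX.mono (inter_subset_inter_right hXY)

theorem suppConj_singleton_eq_suppDisj (y : ι) :
    suppConj T items {y} = suppDisj T items {y} := by
  simp only [suppConj, suppDisj, singleton_subset_iff, ← not_disjoint_iff_nonempty_inter,
    disjoint_singleton_left, not_not]

theorem suppConj_singleton_le_suppDisj {X : Finset ι} {y : ι} (hy : y ∈ X) :
    suppConj T items {y} ≤ suppDisj T items X :=
  suppConj_singleton_eq_suppDisj T items y ▸ suppDisj_mono T items (singleton_subset_iff.2 hy)

/-- `Supp(∧X) ≤ Supp(∧{x})` and `Supp(∧{y}) ≤ Supp(∨X)`; the strict hypothesis forces `0 < m` and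
`0 < Supp(∨X)`, so the division in `bond` is a genuine one. -/
theorem bond_lt_of_suppConj_singleton_lt {X : Finset ι} {x y : ι} (hx : x ∈ X) (hy : y ∈ X)
    {m : ℚ} (hxy : (suppConj T items {x} : ℚ) < m * suppConj T items {y}) :
    bond T items X < m := by
  have hconj : (suppConj T items X : ℚ) ≤ suppConj T items {x} := by
    exact_mod_cast suppConj_anti T items (singleton_subset_iff.2 hx)
  have hdisj : (suppConj T items {y} : ℚ) ≤ suppDisj T items X := by
    exact_mod_cast suppConj_singleton_le_suppDisj T items hy
  have hm_pos : 0 < m * suppConj T items {y} := (Nat.cast_nonneg _).trans_lt hxy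
  have hm : 0 < m := pos_of_mul_pos_left hm_pos (Nat.cast_nonneg _)
  have hdisj_pos : (0 : ℚ) < suppDisj T items X :=
    (pos_of_mul_pos_right hm_pos hm.le).trans_le hdisj
  rw [bond, div_lt_iff₀ hdisj_pos]
  calc (suppConj T items X : ℚ) ≤ suppConj T items {x} := hconj
    _ < m * suppConj T items {y} := hxy
    _ ≤ m * suppDisj T items X := by gcongr

end Support

theorem stmt17_general (T : Finset τ) (items : τ → Finset ι)
    (minbond : ℚ)
    (X : Finset ι)
    (h : ∃ x ∈ X, ∃ y ∈ X,
      (suppConj T items {x} : ℚ) < minbond * (suppConj T items {y} : ℚ)) :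
    bond T items X < minbond := by
  obtain ⟨x, hx, y, hy, hxy⟩ := h
  exact bond_lt_of_suppConj_singleton_lt T items hx hy hxy

theorem stmt17 (T : Finset τ) (items : τ → Finset ι) (I : Finset ι)
    (hitems : ∀ t ∈ T, items t ⊆ I)
    (minbond : ℚ) (hb0 : 0 < minbond) (hb1 : minbond ≤ 1)
    (X : Finset ι) (hXI : X ⊆ I)
    (h : ∃ x ∈ X, ∃ y ∈ X,
      (suppConj T items {x} : ℚ) < minbond * (suppConj T items {y} : ℚ)) :
    bond T items X < minbond :=
  stmt17_general T items minbond X h
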